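/- arXiv:1011.5291 — 3 statements merged into one kernel-verified Lean document; each statement's English description precedes it below -/
import Mathlib

section
/- If N is a 2n×2n real matrix satisfying Nᵀ J N = -J and N² = I (where J is the standard symplectic matrix), then the kernel of N - I is an n-dimensional subspace of ℝ^{2n} on which the standard symplectic form ω₀(x,y) = ⟨Jx, y⟩ vanishes identically (i.e., it is a Lagrangian subspace). -/
open Matrix

lemma myrank_add_le {m : Type*} [Fintype m] [DecidableEq m]
    (A B : Matrix m m ℝ) : (A + B).rank ≤ A.rank + B.rank := by
  rw [Matrix.rank, Matrix.rank, Matrix.rank, Matrix.mulVecLin_add]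
  refine le_trans (Submodule.finrank_mono ?_)
    (Submodule.finrank_add_le_finrank_add_finrank _ _)
  rintro x ⟨v, rfl⟩
  exact Submodule.mem_sup.2 ⟨A.mulVecLin v, ⟨v, rfl⟩, B.mulVecLin v, ⟨v, rfl⟩, rfl⟩

theorem stmt_0 (n : ℕ) (J N : Matrix (Fin n ⊕ Fin n) (Fin n ⊕ Fin n) ℝ)
    (hJ : J = Matrix.fromBlocks 0 (-1) 1 0)
    (hN1 : Nᵀ * J * N = -J) (hN2 : N * N = 1) :
    Module.finrank ℝ (LinearMap.ker (N - 1).mulVecLin) = n ∧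
    ∀ x ∈ LinearMap.ker (N - 1).mulVecLin, ∀ y ∈ LinearMap.ker (N - 1).mulVecLin,
      J.mulVec x ⬝ᵥ y = 0 := by
  have hJJ : J * J = -1 := by
    subst hJ
    simp [Matrix.fromBlocks_multiply, ← Matrix.fromBlocks_one, Matrix.fromBlocks_neg]
  have hJunit : IsUnit J.det := by
    apply Matrix.isUnit_det_of_right_inverse (B := -J)
    rw [Matrix.mul_neg, hJJ, neg_neg]
  -- Nᵀ * J = -(J * N)
  have h3 : Nᵀ * J = -(J * N) := by
    have := congrArg (· * N) hN1
    simp only [Matrix.mul_assoc, hN2, Matrix.mul_one, Matrix.neg_mul] at this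
    exact this
  have h4 : Nᵀ = J * N * J := by
    have := congrArg (· * J) h3
    rw [Matrix.mul_assoc, hJJ, Matrix.mul_neg, Matrix.mul_one, Matrix.neg_mul,
      neg_inj] at this
    exact this
  have h5 : Nᵀ - 1 = J * (N + 1) * J := by
    rw [Matrix.mul_add, Matrix.add_mul, Matrix.mul_one, hJJ, ← h4, sub_eq_add_neg]
  -- rank (N - 1) = rank (N + 1)
  have hrank_eq : (N - 1).rank = (N + 1).rank := by
    calc (N - 1).rank = (N - 1)ᵀ.rank := (Matrix.rank_transpose _).symm
      _ = (J * (N + 1) * J).rank := by rw [Matrix.transpose_sub, Matrix.transpose_one, h5]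
      _ = (N + 1).rank := by
          rw [Matrix.rank_mul_eq_left_of_isUnit_det _ _ hJunit,
            Matrix.rank_mul_eq_right_of_isUnit_det _ _ hJunit]
  have hmul0 : (N - 1) * (N + 1) = 0 := by
    simp only [sub_mul, mul_add, one_mul, mul_one, hN2]
    abel
  have hcard : Fintype.card (Fin n ⊕ Fin n) = n + n := by simp [Fintype.card_sum]
  have hle : (N - 1).rank + (N + 1).rank ≤ n + n := by
    rw [← hcard]; exact Matrix.rank_add_rank_le_card_of_mul_eq_zero hmul0
  have hge : n + n ≤ (N - 1).rank + (N + 1).rank := by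
    have h2 : ((2 : ℝ) • (1 : Matrix (Fin n ⊕ Fin n) (Fin n ⊕ Fin n) ℝ)).rank = n + n := by
      rw [← hcard]
      apply Matrix.rank_of_isUnit
      refine (Matrix.isUnit_iff_isUnit_det _).mpr ?_
      apply Matrix.isUnit_det_of_right_inverse (B := (2 : ℝ)⁻¹ • 1)
      rw [Matrix.smul_mul, Matrix.mul_smul, smul_smul, Matrix.one_mul]
      norm_num
    have heq : (2 : ℝ) • (1 : Matrix (Fin n ⊕ Fin n) (Fin n ⊕ Fin n) ℝ)
        = (N + 1) + (-1 : Matrix _ _ ℝ) * (N - 1) := by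
      rw [neg_one_mul, two_smul]
      abel
    have hneg : ((-1 : Matrix (Fin n ⊕ Fin n) (Fin n ⊕ Fin n) ℝ) * (N - 1)).rank
        = (N - 1).rank := by
      apply Matrix.rank_mul_eq_right_of_isUnit_det
      apply Matrix.isUnit_det_of_right_inverse (B := -1)
      simp
    calc n + n = ((N + 1) + (-1 : Matrix _ _ ℝ) * (N - 1)).rank := by rw [← heq, h2]
      _ ≤ (N + 1).rank + ((-1 : Matrix _ _ ℝ) * (N - 1)).rank := myrank_add_le _ _
      _ = (N - 1).rank + (N + 1).rank := by rw [hneg, add_comm]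
  have hrankn : (N - 1).rank = n := by omega
  constructor
  · have := LinearMap.finrank_range_add_finrank_ker (N - 1).mulVecLin
    rw [Module.finrank_fintype_fun_eq_card, hcard] at this
    have hr : Module.finrank ℝ ↥(LinearMap.range (N - 1).mulVecLin) = n := hrankn
    omega
  · intro x hx y hy
    rw [LinearMap.mem_ker, Matrix.mulVecLin_apply, Matrix.sub_mulVec,
      Matrix.one_mulVec, sub_eq_zero] at hx hy
    have : J.mulVec x ⬝ᵥ y = -(J.mulVec x ⬝ᵥ y) := by
      conv_lhs => rw [← hx, ← hy]
      rw [Matrix.dotProduct_mulVec, ← Matrix.mulVec_transpose,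
        Matrix.mulVec_mulVec, Matrix.mulVec_mulVec, hN1, Matrix.neg_mulVec,
        neg_dotProduct]
    linarith
end

section
/- If x(t) is a 1-periodic solution of ẋ = J∇H̄(x) where H̄ agrees with (π+ε)q outside the ellipsoid E_K = {q < 1}, q(z) = (x₁²+y₁²) + K^{-2}Σ_{j≥2}(x_j²+y_j²), H̄ ≥ 0 everywhere, H̄ = f(q) outside E_K with f' ≤ π+ε, and the action Φ(x) = ∫₀¹ [½⟨-Jẋ, x⟩ - H̄(x)] dt > 0, then x is nonconstant and x(t) ∈ E_K for all t. -/
open scoped RealInnerProductSpace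

/-- The standard symplectic matrix `J` acting on `ℝ^{2n}`. -/
noncomputable def Jlin (n : ℕ) :
    EuclideanSpace ℝ (Fin n ⊕ Fin n) →ₗ[ℝ] EuclideanSpace ℝ (Fin n ⊕ Fin n) :=
  Matrix.toEuclideanLin (Matrix.fromBlocks 0 (-1) 1 0)

namespace Stmt13

open Filter Topology Set

abbrev E (n : ℕ) := EuclideanSpace ℝ (Fin n ⊕ Fin n)

lemma Jlin_apply_inl (n : ℕ) (v : E n) (j : Fin n) :
    Jlin n v (Sum.inl j) = -(v (Sum.inr j)) := by
  simp [Jlin, Matrix.toEuclideanLin_apply, Matrix.mulVec, dotProduct,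
    Matrix.fromBlocks, Fintype.sum_sum_type, Matrix.one_apply]

lemma Jlin_apply_inr (n : ℕ) (v : E n) (j : Fin n) :
    Jlin n v (Sum.inr j) = v (Sum.inl j) := by
  simp [Jlin, Matrix.toEuclideanLin_apply, Matrix.mulVec, dotProduct,
    Matrix.fromBlocks, Fintype.sum_sum_type, Matrix.one_apply]

lemma Jlin_skew (n : ℕ) (v : E n) : ⟪v, Jlin n v⟫ = 0 := by
  rw [PiLp.inner_apply]
  rw [Fintype.sum_sum_type]
  simp only [Jlin_apply_inl, Jlin_apply_inr, RCLike.inner_apply, starRingEnd_apply, star_trivial]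
  ring_nf
  rw [← Finset.sum_add_distrib]
  simp [mul_comm]

lemma Jlin_sq (n : ℕ) (v : E n) : Jlin n (Jlin n v) = -v := by
  ext i
  cases i <;> simp [Jlin_apply_inl, Jlin_apply_inr]

variable (n : ℕ) (hn : 0 < n) (K : ℕ)

noncomputable def qfun : E n → ℝ := fun z =>
  (z (Sum.inl ⟨0, hn⟩) ^ 2 + z (Sum.inr ⟨0, hn⟩) ^ 2) +
      ((K : ℝ) ^ 2)⁻¹ * ∑ j ∈ Finset.univ.filter (fun j : Fin n => j ≠ ⟨0, hn⟩),
        (z (Sum.inl j) ^ 2 + z (Sum.inr j) ^ 2)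

noncomputable def Dq (z : E n) : E n →L[ℝ] ℝ :=
  ((2 * z (Sum.inl ⟨0, hn⟩)) • EuclideanSpace.proj (Sum.inl ⟨0, hn⟩) +
   (2 * z (Sum.inr ⟨0, hn⟩)) • EuclideanSpace.proj (Sum.inr ⟨0, hn⟩)) +
  ((K : ℝ) ^ 2)⁻¹ • ∑ j ∈ Finset.univ.filter (fun j : Fin n => j ≠ ⟨0, hn⟩),
    ((2 * z (Sum.inl j)) • (EuclideanSpace.proj (Sum.inl j) : E n →L[ℝ] ℝ) +
     (2 * z (Sum.inr j)) • (EuclideanSpace.proj (Sum.inr j) : E n →L[ℝ] ℝ))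

lemma Dq_apply (z v : E n) : Dq n hn K z v =
    (2 * z (Sum.inl ⟨0, hn⟩) * v (Sum.inl ⟨0, hn⟩) + 2 * z (Sum.inr ⟨0, hn⟩) * v (Sum.inr ⟨0, hn⟩)) +
    ((K : ℝ) ^ 2)⁻¹ * ∑ j ∈ Finset.univ.filter (fun j : Fin n => j ≠ ⟨0, hn⟩),
      (2 * z (Sum.inl j) * v (Sum.inl j) + 2 * z (Sum.inr j) * v (Sum.inr j)) := by
  simp [Dq, ContinuousLinearMap.sum_apply, Finset.mul_sum]

lemma hasFDerivAt_qfun (z : E n) : HasFDerivAt (qfun n hn K) (Dq n hn K z) z := by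
  have hsq : ∀ i : Fin n ⊕ Fin n, HasFDerivAt (fun y : E n => y i ^ 2)
      ((2 * z i) • (EuclideanSpace.proj i : E n →L[ℝ] ℝ)) z := by
    intro i
    have h := ((EuclideanSpace.proj (𝕜 := ℝ) i).hasFDerivAt (x := z)).mul
      ((EuclideanSpace.proj (𝕜 := ℝ) i).hasFDerivAt (x := z))
    have h' : HasFDerivAt (fun y : E n => y i ^ 2)
        (z i • (EuclideanSpace.proj i : E n →L[ℝ] ℝ) + z i • EuclideanSpace.proj i) z := by
      simp only [pow_two]; exact h
    have : (2 * z i) • (EuclideanSpace.proj i : E n →L[ℝ] ℝ) =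
        z i • (EuclideanSpace.proj i : E n →L[ℝ] ℝ) + z i • EuclideanSpace.proj i := by
      rw [two_mul, add_smul]
    rw [this]; exact h'
  have hsum := HasFDerivAt.fun_sum (x := z)
    (fun j (_ : j ∈ Finset.univ.filter (fun j : Fin n => j ≠ ⟨0, hn⟩)) =>
      (hsq (Sum.inl j)).add (hsq (Sum.inr j)))
  exact ((hsq (Sum.inl ⟨0, hn⟩)).add (hsq (Sum.inr ⟨0, hn⟩))).add (hsum.const_mul ((K : ℝ) ^ 2)⁻¹)

lemma Dq_self (z : E n) : Dq n hn K z z = 2 * qfun n hn K z := by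
  rw [Dq_apply, qfun]
  have : ∑ j ∈ Finset.univ.filter (fun j : Fin n => j ≠ ⟨0, hn⟩),
      (2 * z (Sum.inl j) * z (Sum.inl j) + 2 * z (Sum.inr j) * z (Sum.inr j)) =
      2 * ∑ j ∈ Finset.univ.filter (fun j : Fin n => j ≠ ⟨0, hn⟩),
      (z (Sum.inl j) ^ 2 + z (Sum.inr j) ^ 2) := by
    rw [Finset.mul_sum]; exact Finset.sum_congr rfl fun j _ => by ring
  rw [this]; ring

lemma Dq_smul (a : ℝ) (z : E n) : Dq n hn K (a • z) = a • Dq n hn K z := by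
  refine ContinuousLinearMap.ext fun v => ?_
  simp only [Dq_apply, ContinuousLinearMap.smul_apply, PiLp.smul_apply, smul_eq_mul]
  have : ∑ j ∈ Finset.univ.filter (fun j : Fin n => j ≠ ⟨0, hn⟩),
      (2 * (a * z (Sum.inl j)) * v (Sum.inl j) + 2 * (a * z (Sum.inr j)) * v (Sum.inr j)) =
      a * ∑ j ∈ Finset.univ.filter (fun j : Fin n => j ≠ ⟨0, hn⟩),
      (2 * z (Sum.inl j) * v (Sum.inl j) + 2 * z (Sum.inr j) * v (Sum.inr j)) := by
    rw [Finset.mul_sum]; exact Finset.sum_congr rfl fun j _ => by ring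
  rw [this]; ring

lemma qfun_smul (a : ℝ) (z : E n) : qfun n hn K (a • z) = a ^ 2 * qfun n hn K z := by
  simp only [qfun, PiLp.smul_apply, smul_eq_mul]
  have : ∑ j ∈ Finset.univ.filter (fun j : Fin n => j ≠ ⟨0, hn⟩),
      ((a * z (Sum.inl j)) ^ 2 + (a * z (Sum.inr j)) ^ 2) =
      a ^ 2 * ∑ j ∈ Finset.univ.filter (fun j : Fin n => j ≠ ⟨0, hn⟩),
      (z (Sum.inl j) ^ 2 + z (Sum.inr j) ^ 2) := by
    rw [Finset.mul_sum]; exact Finset.sum_congr rfl fun j _ => by ring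
  rw [this]; ring

noncomputable def Gq (z : E n) : E n := (InnerProductSpace.toDual ℝ (E n)).symm (Dq n hn K z)

lemma hasGradientAt_qfun (z : E n) : HasGradientAt (qfun n hn K) (Gq n hn K z) z :=
  hasFDerivAt_iff_hasGradientAt.mp (hasFDerivAt_qfun n hn K z)

lemma inner_Gq (z v : E n) : ⟪Gq n hn K z, v⟫ = Dq n hn K z v := by
  rw [← InnerProductSpace.toDual_apply_apply, Gq, LinearIsometryEquiv.apply_symm_apply]

lemma Gq_smul (a : ℝ) (z : E n) : Gq n hn K (a • z) = a • Gq n hn K z := by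
  rw [Gq, Gq, Dq_smul, map_smul]

/-- `f` constant on `(-∞, 1]` and `C¹` forces `deriv f 1 = 0`. -/
lemma deriv_f_one (f : ℝ → ℝ) (hf : ContDiff ℝ 1 f) (m : ℝ) (hf1 : ∀ s ≤ (1:ℝ), f s = m) :
    deriv f 1 = 0 := by
  have hderivcont : Continuous (deriv f) := hf.continuous_deriv le_rfl
  have hd0 : ∀ s < (1:ℝ), deriv f s = 0 := by
    intro s hs
    have hev : f =ᶠ[𝓝 s] (fun _ => m) :=
      Filter.eventuallyEq_of_mem (Iio_mem_nhds hs) (fun w hw => hf1 w (le_of_lt hw))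
    rw [hev.deriv_eq]; exact deriv_const s m
  have h1 : Tendsto (deriv f) (𝓝[<] (1:ℝ)) (𝓝 (deriv f 1)) :=
    (hderivcont.continuousAt.continuousWithinAt).tendsto
  have h2 : Tendsto (deriv f) (𝓝[<] (1:ℝ)) (𝓝 0) := by
    refine Tendsto.congr' ?_ tendsto_const_nhds
    exact eventually_nhdsWithin_of_forall (fun s hs => (hd0 s hs).symm)
  exact tendsto_nhds_unique h1 h2

/-- Outside and on the boundary of the ellipsoid, the gradient of `H̄` equals
`f'(q z) • ∇q z`. -/
theorem grad_eq (Hbar : E n → ℝ) (hHbar : ContDiff ℝ 2 Hbar) (f : ℝ → ℝ)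
    (hf : ContDiff ℝ 1 f) (m : ℝ)
    (hfout : ∀ z, 1 ≤ qfun n hn K z → Hbar z = f (qfun n hn K z))
    (hf1 : ∀ s ≤ (1:ℝ), f s = m) :
    ∀ z, 1 ≤ qfun n hn K z → gradient Hbar z = deriv f (qfun n hn K z) • Gq n hn K z := by
  have hgrad : ∀ z, HasGradientAt (qfun n hn K) (Gq n hn K z) z := hasGradientAt_qfun n hn K
  have qcont : Continuous (qfun n hn K) :=
    continuous_iff_continuousAt.mpr fun z => (hgrad z).differentiableAt.continuousAt
  have hU : IsOpen {z : E n | 1 < qfun n hn K z} := isOpen_lt continuous_const qcont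
  have hopen : ∀ z, 1 < qfun n hn K z →
      gradient Hbar z = deriv f (qfun n hn K z) • Gq n hn K z := by
    intro z hz
    have hev : Hbar =ᶠ[𝓝 z] (f ∘ qfun n hn K) :=
      Filter.eventuallyEq_of_mem (hU.mem_nhds hz) (fun w hw => hfout w (le_of_lt hw))
    rw [hev.gradient_eq]
    have hd : HasDerivAt f (deriv f (qfun n hn K z)) (qfun n hn K z) :=
      ((hf.differentiable one_ne_zero) (qfun n hn K z)).hasDerivAt
    have hfd := hd.comp_hasFDerivAt z (hgrad z).hasFDerivAt
    rw [← map_smul] at hfd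
    exact hfd.hasGradientAt.gradient.trans (by rw [LinearIsometryEquiv.symm_apply_apply])
  have hderivcont : Continuous (deriv f) := hf.continuous_deriv le_rfl
  have hderiv1 : deriv f 1 = 0 := deriv_f_one f hf m hf1
  intro z hz
  rcases lt_or_eq_of_le hz with hz1 | hz1
  · exact hopen z hz1
  set ck : ℕ → ℝ := fun k => 1 + 1/(k+1) with hck
  have hck1 : ∀ k, 1 < ck k := by
    intro k
    have : (0:ℝ) < 1/(k+1) := by positivity
    simp [hck]; linarith
  have hcklim : Tendsto ck atTop (𝓝 1) := by
    have := tendsto_one_div_add_atTop_nhds_zero_nat (𝕜 := ℝ)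
    have h := this.const_add (1:ℝ)
    simpa [hck, one_div] using h
  set zk : ℕ → E n := fun k => ck k • z with hzk
  have hzklim : Tendsto zk atTop (𝓝 z) := by
    have := hcklim.smul_const z
    simpa using this
  have hqzk : ∀ k, qfun n hn K (zk k) = ck k ^ 2 := by
    intro k; rw [hzk]; simp only [qfun_smul, ← hz1]; ring
  have hgradk : ∀ k, gradient Hbar (zk k) = (deriv f (ck k ^ 2) * ck k) • Gq n hn K z := by
    intro k
    have h1 : 1 < qfun n hn K (zk k) := by
      rw [hqzk]; exact one_lt_pow₀ (hck1 k) two_ne_zero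
    rw [hopen _ h1, hqzk, hzk, Gq_smul, smul_smul]
  have hgradcont : Continuous (gradient Hbar) := by
    have hfd : Continuous (fderiv ℝ Hbar) := hHbar.continuous_fderiv (by norm_num)
    exact (InnerProductSpace.toDual ℝ (E n)).symm.continuous.comp hfd
  have hlim1 : Tendsto (fun k => gradient Hbar (zk k)) atTop (𝓝 (gradient Hbar z)) :=
    (hgradcont.continuousAt.tendsto).comp hzklim
  have hlim2 : Tendsto (fun k => (deriv f (ck k ^ 2) * ck k) • Gq n hn K z) atTop (𝓝 0) := by
    have hsq : Tendsto (fun k => ck k ^ 2) atTop (𝓝 1) := by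
      have := hcklim.mul hcklim
      simpa [pow_two] using this
    have hds : Tendsto (fun k => deriv f (ck k ^ 2)) atTop (𝓝 0) := by
      have := (hderivcont.continuousAt (x := (1:ℝ))).tendsto.comp hsq
      rwa [hderiv1] at this
    have := (hds.mul hcklim).smul_const (Gq n hn K z)
    simpa using this
  have hzero : gradient Hbar z = 0 := by
    refine tendsto_nhds_unique ?_ hlim2
    exact hlim1.congr (fun k => (hgradk k))
  rw [hzero, ← hz1, hderiv1, zero_smul]

/-- A differentiable function whose derivative vanishes on `{g ≥ 1}` has constant
`max (g ·) 1`. -/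
lemma maxconst (g g' : ℝ → ℝ) (hg : ∀ t, HasDerivAt g (g' t) t)
    (h0 : ∀ t, 1 ≤ g t → g' t = 0) : ∀ t s, max (g t) 1 = max (g s) 1 := by
  set h : ℝ → ℝ := fun t => max (g t) 1 with hh
  have hd : ∀ t, HasDerivAt h 0 t := by
    intro t
    rcases lt_or_ge (g t) 1 with hlt | hge
    · have hev : (fun _ => (1:ℝ)) =ᶠ[𝓝 t] h := by
        have : ∀ᶠ s in 𝓝 t, g s < 1 :=
          (hg t).continuousAt.eventually_lt continuousAt_const hlt
        filter_upwards [this] with s hs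
        simp [hh, max_eq_right hs.le]
      exact (hasDerivAt_const t (1:ℝ)).congr_of_eventuallyEq hev.symm
    · have hg0 : HasDerivAt g 0 t := by
        have := hg t; rwa [h0 t hge] at this
      rw [hasDerivAt_iff_isLittleO] at hg0 ⊢
      refine Asymptotics.IsBigO.trans_isLittleO ?_ (by simpa using hg0)
      refine Asymptotics.isBigO_of_le _ (fun s => ?_)
      have := abs_max_sub_max_le_abs (g s) (g t) 1
      simpa [hh] using this
  have hdiff : Differentiable ℝ h := fun t => (hd t).differentiableAt
  have hzero : ∀ t, deriv h t = 0 := fun t => (hd t).deriv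
  exact is_const_of_deriv_eq_zero hdiff hzero

/-- An orbit of a locally Lipschitz vector field passing through a zero of the field
is constant. -/
lemma orbit_const {Ee : Type*} [NormedAddCommGroup Ee] [NormedSpace ℝ Ee]
    (F : Ee → Ee) (hF : LocallyLipschitz F) (x : ℝ → Ee)
    (hx : ∀ t, HasDerivAt x (F (x t)) t) (z₀ : Ee) (hz₀ : F z₀ = 0)
    (t₀ : ℝ) (ht₀ : x t₀ = z₀) : ∀ t, x t = z₀ := by
  set S : Set ℝ := {t | x t = z₀} with hS
  have hxc : Continuous x := continuous_iff_continuousAt.mpr fun t => (hx t).continuousAt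
  have hclosed : IsClosed S := isClosed_eq hxc continuous_const
  have hopen : IsOpen S := by
    rw [isOpen_iff_mem_nhds]
    intro t₁ ht₁
    obtain ⟨K₀, U, hU, hLip⟩ := hF z₀
    have heq : x =ᶠ[𝓝 t₁] (fun _ => z₀) := by
      refine ODE_solution_unique_of_eventually (v := fun _ => F) (s := fun _ => U)
        (Eventually.of_forall fun _ => hLip) ?_ ?_ ht₁
      · have : ∀ᶠ t in 𝓝 t₁, x t ∈ U := by
          have hxt₁ : x t₁ = z₀ := ht₁
          have : Tendsto x (𝓝 t₁) (𝓝 z₀) := by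
            have h2 : Tendsto x (𝓝 t₁) (𝓝 (x t₁)) := hxc.continuousAt (x := t₁)
            rwa [hxt₁] at h2
          exact this.eventually_mem hU
        filter_upwards [this] with t ht
        exact ⟨hx t, ht⟩
      · refine Eventually.of_forall (fun t => ⟨?_, mem_of_mem_nhds hU⟩)
        have : HasDerivAt (fun _ : ℝ => z₀) 0 t := hasDerivAt_const t z₀
        simpa [hz₀] using this
    exact heq.mono (fun t ht => ht)
  have : S = univ := by
    rcases isClopen_iff.mp ⟨hclosed, hopen⟩ with h | h
    · exact absurd (h ▸ ht₀ : t₀ ∈ (∅ : Set ℝ)) (notMem_empty t₀)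
    · exact h
  intro t; exact (this ▸ mem_univ t : t ∈ S)

end Stmt13

/-- Any 1-periodic orbit of `ẋ = J∇H̄(x)` with positive action is nonconstant and
stays inside the ellipsoid `E_K = {q < 1}`. -/
theorem stmt_13 (n : ℕ) (hn : 0 < n) (ε : ℝ) (hε : 0 < ε) (K : ℕ) (hK : 0 < K)
    (q : EuclideanSpace ℝ (Fin n ⊕ Fin n) → ℝ)
    (hq : q = fun z => (z (Sum.inl ⟨0, hn⟩) ^ 2 + z (Sum.inr ⟨0, hn⟩) ^ 2) +
      ((K : ℝ) ^ 2)⁻¹ * ∑ j ∈ Finset.univ.filter (fun j : Fin n => j ≠ ⟨0, hn⟩),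
        (z (Sum.inl j) ^ 2 + z (Sum.inr j) ^ 2))
    (Hbar : EuclideanSpace ℝ (Fin n ⊕ Fin n) → ℝ) (hHbar : ContDiff ℝ 2 Hbar)
    (hHnonneg : ∀ z, 0 ≤ Hbar z)
    (f : ℝ → ℝ) (hf : ContDiff ℝ 1 f) (m : ℝ)
    (hfout : ∀ z, 1 ≤ q z → Hbar z = f (q z))
    (hf1 : ∀ s ≤ (1:ℝ), f s = m)
    (hf2 : ∀ s, (Real.pi + ε) * s ≤ f s)
    (hf3 : ∃ s₀, ∀ s ≥ s₀, f s = (Real.pi + ε) * s)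
    (hf4 : ∀ s > (1:ℝ), 0 < deriv f s ∧ deriv f s ≤ Real.pi + ε)
    (x x' : ℝ → EuclideanSpace ℝ (Fin n ⊕ Fin n))
    (hx : ∀ t, HasDerivAt x (x' t) t)
    (hham : ∀ t, x' t = Jlin n (gradient Hbar (x t)))
    (hper : ∀ t, x (t + 1) = x t)
    (haction : 0 < ∫ t in (0:ℝ)..1,
      ((1 / 2) * ⟪-(Jlin n (x' t)), x t⟫ - Hbar (x t))) :
    (∃ t s : ℝ, x t ≠ x s) ∧ ∀ t, q (x t) < 1 := by
  classical
  have hq2 : q = Stmt13.qfun n hn K := by rw [hq]; rfl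
  subst hq2
  -- If the orbit is constant, the action is nonpositive: contradiction machine.
  have hconst_contra : ∀ z₀ : EuclideanSpace ℝ (Fin n ⊕ Fin n), (∀ t, x t = z₀) → False := by
    intro z₀ hconst
    have hx'0 : ∀ t, x' t = 0 := by
      intro t
      have hc : HasDerivAt x 0 t := by
        rw [show x = fun _ => z₀ from funext hconst]
        exact hasDerivAt_const t z₀
      exact (hx t).unique hc
    have hexpr : ∀ t : ℝ, (1 / 2) * ⟪-(Jlin n (x' t)), x t⟫ - Hbar (x t) = -Hbar z₀ := by
      intro t
      rw [hx'0, hconst]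
      simp
    have hint : (∫ t in (0:ℝ)..1, ((1 / 2) * ⟪-(Jlin n (x' t)), x t⟫ - Hbar (x t)))
        = -Hbar z₀ := by
      rw [intervalIntegral.integral_congr (g := fun _ => -Hbar z₀) (fun t _ => hexpr t)]
      simp
    rw [hint] at haction
    linarith [hHnonneg z₀]
  -- the gradient formula outside/on the ellipsoid
  have hgradH := Stmt13.grad_eq n hn K Hbar hHbar f hf m hfout hf1
  -- derivative of q ∘ x
  set g : ℝ → ℝ := fun t => Stmt13.qfun n hn K (x t) with hg
  have hgd : ∀ t, HasDerivAt g (Stmt13.Dq n hn K (x t) (x' t)) t := fun t =>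
    (Stmt13.hasFDerivAt_qfun n hn K (x t)).comp_hasDerivAt t (hx t)
  have h0 : ∀ t, 1 ≤ g t → Stmt13.Dq n hn K (x t) (x' t) = 0 := by
    intro t ht
    rw [← Stmt13.inner_Gq]
    rw [hham t, hgradH (x t) ht, map_smul]
    rw [real_inner_smul_right, Stmt13.Jlin_skew, mul_zero]
  -- main dichotomy
  have hkey : ∀ t, g t < 1 := by
    by_contra hcon
    push_neg at hcon
    obtain ⟨t₀, ht₀⟩ := hcon
    have hmax := Stmt13.maxconst g _ hgd h0
    by_cases hA : ∃ t₁, 1 < g t₁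
    · obtain ⟨t₁, ht₁⟩ := hA
      -- q ∘ x is constant ≡ s > 1
      have hgs : ∀ t, g t = g t₁ := by
        intro t
        have h1 : max (g t) 1 = g t₁ := by
          rw [hmax t t₁]; exact max_eq_left ht₁.le
        rcases le_or_gt (g t) 1 with h2 | h2
        · rw [max_eq_right h2] at h1; linarith
        · rwa [max_eq_left h2.le] at h1
      set s : ℝ := g t₁ with hs
      have hs1 : 1 < s := ht₁
      have hexpr : ∀ t : ℝ, (1 / 2) * ⟪-(Jlin n (x' t)), x t⟫ - Hbar (x t)
          = deriv f s * s - f s := by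
        intro t
        have hgt : Stmt13.qfun n hn K (x t) = s := hgs t
        have hq1 : (1:ℝ) ≤ Stmt13.qfun n hn K (x t) := by rw [hgt]; exact hs1.le
        have hxt : x' t = deriv f s • Jlin n (Stmt13.Gq n hn K (x t)) := by
          rw [hham t, hgradH (x t) hq1, map_smul, hgt]
        have hJ : -(Jlin n (x' t)) = deriv f s • Stmt13.Gq n hn K (x t) := by
          rw [hxt, map_smul, Stmt13.Jlin_sq, smul_neg, neg_neg]
        rw [hJ, real_inner_smul_left, Stmt13.inner_Gq, Stmt13.Dq_self, hfout (x t) hq1, hgt]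
        ring
      have hC : deriv f s * s - f s ≤ 0 := by
        have h1 : deriv f s * s ≤ (Real.pi + ε) * s :=
          mul_le_mul_of_nonneg_right (hf4 s hs1).2 (by linarith)
        have h2 := hf2 s
        linarith
      have hint : (∫ t in (0:ℝ)..1, ((1 / 2) * ⟪-(Jlin n (x' t)), x t⟫ - Hbar (x t)))
          = deriv f s * s - f s := by
        rw [intervalIntegral.integral_congr (g := fun _ => deriv f s * s - f s)
          (fun t _ => hexpr t)]
        simp
      rw [hint] at haction
      linarith
    · -- boundary case: g ≤ 1, g t₀ = 1, orbit constant
      push_neg at hA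
      have hgt₀ : g t₀ = 1 := le_antisymm (hA t₀) ht₀
      have hgt₀' : Stmt13.qfun n hn K (x t₀) = 1 := hgt₀
      have hgrad0 : gradient Hbar (x t₀) = 0 := by
        have := hgradH (x t₀) hgt₀'.ge
        rw [hgt₀'] at this
        rw [this, Stmt13.deriv_f_one f hf m hf1, zero_smul]
      -- the vector field
      set F : EuclideanSpace ℝ (Fin n ⊕ Fin n) → EuclideanSpace ℝ (Fin n ⊕ Fin n) :=
        fun z => Jlin n (gradient Hbar z) with hF
      have hFlip : LocallyLipschitz F := by
        have h1 : ContDiff ℝ 1 (fderiv ℝ Hbar) := hHbar.fderiv_right (by norm_num)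
        have h2 : ContDiff ℝ 1 (gradient Hbar) :=
          ((InnerProductSpace.toDual ℝ (EuclideanSpace ℝ (Fin n ⊕ Fin n))).symm.contDiff).comp h1
        have h3 : ContDiff ℝ 1 F :=
          ((LinearMap.toContinuousLinearMap (Jlin n)).contDiff).comp h2
        exact h3.locallyLipschitz
      have hxF : ∀ t, HasDerivAt x (F (x t)) t := by
        intro t
        have := hx t
        rwa [hham t] at this
      have hFz₀ : F (x t₀) = 0 := by
        show Jlin n (gradient Hbar (x t₀)) = 0
        rw [hgrad0, map_zero]
      exact hconst_contra (x t₀) (Stmt13.orbit_const F hFlip x hxF (x t₀) hFz₀ t₀ rfl)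
  refine ⟨?_, hkey⟩
  by_contra hcon
  push_neg at hcon
  exact hconst_contra (x 0) (fun t => hcon t 0)
end

section
/- Let Φ: X → ℝ be a C¹ functional on a Hilbert space satisfying the Palais–Smale condition, whose negative gradient flow φᵗ is globally defined. Suppose Ω ⊂ X and Γ ⊂ X satisfy: φᵗ(Ω) ∩ Γ ≠ ∅ for all t ≥ 0, Φ|_Γ ≥ β > 0, and Φ maps bounded sets to bounded sets with sup_{φᵗ(Ω)} Φ < ∞ for each t. Then c = inf_{t≥0} sup_{x ∈ φᵗ(Ω)} Φ(x) satisfies β ≤ c < ∞, and c is a critical value of Φ; in particular there exists x* with ∇Φ(x*) = 0 and Φ(x*) ≥ β > 0. -/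
open Filter

/-- Minimax lemma: for a C¹ functional `Φ` on a Hilbert space satisfying the
Palais–Smale condition, with globally defined negative gradient flow `φᵗ`, a
bounded set `Ω` and a set `Γ` with `φᵗ(Ω) ∩ Γ ≠ ∅` for all `t ≥ 0` and
`Φ|_Γ ≥ β > 0`, the minimax value `c = inf_{t ≥ 0} sup_{φᵗ(Ω)} Φ` satisfies
`β ≤ c` and is a critical value of `Φ`. -/
theorem stmt_19 (X : Type*) [NormedAddCommGroup X] [InnerProductSpace ℝ X] [CompleteSpace X]
    (Φ : X → ℝ) (hΦ : ContDiff ℝ 1 Φ)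
    (hPS : ∀ u : ℕ → X, (∃ C, ∀ k, |Φ (u k)| ≤ C) →
      Tendsto (fun k => ‖gradient Φ (u k)‖) atTop (nhds 0) →
      ∃ v : X, ∃ σ : ℕ → ℕ, StrictMono σ ∧ Tendsto (u ∘ σ) atTop (nhds v))
    (flow : ℝ → X → X) (hflow0 : ∀ x, flow 0 x = x)
    (hflowadd : ∀ s t x, flow (s + t) x = flow s (flow t x))
    (hflow : ∀ x t, HasDerivAt (fun s => flow s x) (-(gradient Φ (flow t x))) t)
    (Ω Γ : Set X) (hΩ : Bornology.IsBounded Ω)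
    (hmeet : ∀ t : ℝ, 0 ≤ t → (flow t '' Ω ∩ Γ).Nonempty)
    (β : ℝ) (hβ : 0 < β) (hΓ : ∀ x ∈ Γ, β ≤ Φ x)
    (hbdd : ∀ s : Set X, Bornology.IsBounded s → Bornology.IsBounded (Φ '' s))
    (c : ℝ) (hc : c = sInf {d : ℝ | ∃ t : ℝ, 0 ≤ t ∧ d = sSup (Φ '' (flow t '' Ω))}) :
    β ≤ c ∧ ∃ xstar : X, gradient Φ xstar = 0 ∧ Φ xstar = c ∧ β ≤ Φ xstar := by
  have hdiff : Differentiable ℝ Φ := hΦ.differentiable one_ne_zero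
  -- derivative of the energy along trajectories
  have hg : ∀ x t, HasDerivAt (fun s => Φ (flow s x)) (-‖gradient Φ (flow t x)‖ ^ 2) t := by
    intro x t
    have h1 := ((hdiff (flow t x)).hasGradientAt.hasFDerivAt).comp_hasDerivAt t (hflow x t)
    refine h1.congr_deriv ?_
    rw [InnerProductSpace.toDual_apply_apply, inner_neg_right, real_inner_self_eq_norm_sq]
  -- energy is antitone along trajectories
  have hanti : ∀ x : X, Antitone (fun s => Φ (flow s x)) := by
    intro x
    refine antitone_of_deriv_nonpos (fun t => (hg x t).differentiableAt) (fun t => ?_)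
    rw [(hg x t).deriv]
    exact neg_nonpos.mpr (sq_nonneg _)
  -- Ω is nonempty
  obtain ⟨y0, hy0Ω, _⟩ := hmeet 0 le_rfl
  obtain ⟨x0, hx0, _⟩ := hy0Ω
  -- upper bound on Φ over Ω
  obtain ⟨M, hM⟩ : BddAbove (Φ '' Ω) := (hbdd Ω hΩ).bddAbove
  set S : ℝ → ℝ := fun t => sSup (Φ '' (flow t '' Ω)) with hS
  have hub : ∀ t : ℝ, 0 ≤ t → ∀ y ∈ Φ '' (flow t '' Ω), y ≤ M := by
    rintro t ht y ⟨z, ⟨x, hx, rfl⟩, rfl⟩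
    calc Φ (flow t x) ≤ Φ (flow 0 x) := hanti x ht
      _ = Φ x := by rw [hflow0]
      _ ≤ M := hM ⟨x, hx, rfl⟩
  have hbddA : ∀ t : ℝ, 0 ≤ t → BddAbove (Φ '' (flow t '' Ω)) := fun t ht => ⟨M, hub t ht⟩
  have hne : ∀ t : ℝ, (Φ '' (flow t '' Ω)).Nonempty := fun t => ⟨Φ (flow t x0), ⟨flow t x0, ⟨x0, hx0, rfl⟩, rfl⟩⟩
  have hleS : ∀ t : ℝ, 0 ≤ t → ∀ x ∈ Ω, Φ (flow t x) ≤ S t := by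
    intro t ht x hx
    exact le_csSup (hbddA t ht) ⟨flow t x, ⟨x, hx, rfl⟩, rfl⟩
  have hβS : ∀ t : ℝ, 0 ≤ t → β ≤ S t := by
    intro t ht
    obtain ⟨y, ⟨x, hx, rfl⟩, hyΓ⟩ := hmeet t ht
    exact le_trans (hΓ _ hyΓ) (hleS t ht x hx)
  set D : Set ℝ := {d : ℝ | ∃ t : ℝ, 0 ≤ t ∧ d = sSup (Φ '' (flow t '' Ω))} with hD
  have hDne : D.Nonempty := ⟨S 0, 0, le_rfl, rfl⟩
  have hDbdd : BddBelow D := ⟨β, by rintro d ⟨t, ht, rfl⟩; exact hβS t ht⟩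
  have hβc : β ≤ c := by
    rw [hc]
    exact le_csInf hDne (by rintro d ⟨t, ht, rfl⟩; exact hβS t ht)
  have hcleS : ∀ t : ℝ, 0 ≤ t → c ≤ S t := by
    intro t ht
    rw [hc]
    exact csInf_le hDbdd ⟨t, ht, rfl⟩
  -- construct the Palais–Smale sequence
  have key : ∀ n : ℕ, ∃ u : X, |Φ u - c| ≤ 1 / (n + 1) ∧ ‖gradient Φ u‖ ^ 2 ≤ 2 / (n + 1) := by
    intro n
    have hεpos : (0 : ℝ) < 1 / (n + 1) := by positivity
    set ε : ℝ := 1 / (n + 1)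
    -- choose T with S T < c + ε
    have h1 : sInf D < c + ε := by rw [← hc]; linarith
    obtain ⟨d, ⟨T, hT, rfl⟩, hdlt⟩ := exists_lt_of_csInf_lt hDne h1
    -- choose x with Φ (flow (T+1) x) > S (T+1) - ε
    have hT1 : (0:ℝ) ≤ T + 1 := by linarith
    have h2 : S (T + 1) - ε < sSup (Φ '' (flow (T + 1) '' Ω)) := by
      simp only [hS]; linarith
    obtain ⟨y, hy, hylt⟩ := exists_lt_of_lt_csSup (hne (T + 1)) h2
    obtain ⟨z, ⟨x, hx, rfl⟩, rfl⟩ := hy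
    -- mean value theorem on [T, T+1]
    have hTlt : T < T + 1 := by linarith
    obtain ⟨s, hs, hseq⟩ := exists_hasDerivAt_eq_slope (fun r => Φ (flow r x))
      (fun r => -‖gradient Φ (flow r x)‖ ^ 2) hTlt
      (fun r _ => ((hg x r).differentiableAt.continuousAt).continuousWithinAt)
      (fun r _ => hg x r)
    refine ⟨flow s x, ?_, ?_⟩
    · -- |Φ (flow s x) - c| ≤ ε
      have h3 : Φ (flow s x) ≤ Φ (flow T x) := hanti x hs.1.le
      have h4 : Φ (flow (T + 1) x) ≤ Φ (flow s x) := hanti x hs.2.le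
      have h5 : Φ (flow T x) ≤ S T := hleS T hT x hx
      have h6 : c - ε < Φ (flow (T + 1) x) := by
        have := hcleS (T + 1) hT1
        linarith
      rw [abs_le]
      constructor <;> linarith
    · -- gradient bound
      have h7 : -‖gradient Φ (flow s x)‖ ^ 2 = Φ (flow (T + 1) x) - Φ (flow T x) := by
        have : T + 1 - T = (1:ℝ) := by ring
        rw [hseq, this, div_one]
      have h5 : Φ (flow T x) ≤ S T := hleS T hT x hx
      have h6 : c - ε < Φ (flow (T + 1) x) := by
        have := hcleS (T + 1) hT1
        linarith
      have : ‖gradient Φ (flow s x)‖ ^ 2 ≤ 2 * ε := by nlinarith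
      calc ‖gradient Φ (flow s x)‖ ^ 2 ≤ 2 * ε := this
        _ = 2 / (n + 1) := by rw [mul_one_div]
  choose u hu1 hu2 using key
  -- Φ (u n) is bounded
  have hub2 : ∃ C, ∀ k, |Φ (u k)| ≤ C := by
    refine ⟨|c| + 1, fun k => ?_⟩
    have h1 := hu1 k
    have h2 : (1:ℝ) / (k + 1) ≤ 1 := by
      rw [div_le_one (by positivity)]
      simp
    calc |Φ (u k)| ≤ |Φ (u k) - c| + |c| := by
          have := abs_sub_abs_le_abs_sub (Φ (u k)) c
          have := abs_add_le (Φ (u k) - c) c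
          simp only [sub_add_cancel] at this
          linarith
      _ ≤ |c| + 1 := by linarith
  -- gradient tends to zero
  have hnt : Tendsto (fun n : ℕ => (1:ℝ) / (n + 1)) atTop (nhds 0) :=
    tendsto_one_div_add_atTop_nhds_zero_nat
  have hgr : Tendsto (fun k => ‖gradient Φ (u k)‖) atTop (nhds 0) := by
    have hsq : Tendsto (fun n : ℕ => Real.sqrt (2 / (n + 1))) atTop (nhds 0) := by
      have : Tendsto (fun n : ℕ => (2:ℝ) / (n + 1)) atTop (nhds 0) := by
        have := hnt.const_mul (2:ℝ)
        simpa [mul_one_div, div_eq_mul_inv] using this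
      have h := (Real.continuous_sqrt.tendsto 0).comp this
      rw [Real.sqrt_zero] at h
      exact h
    refine squeeze_zero (fun k => norm_nonneg _) (fun k => ?_) hsq
    have h := hu2 k
    have : ‖gradient Φ (u k)‖ = Real.sqrt (‖gradient Φ (u k)‖ ^ 2) := by
      rw [Real.sqrt_sq (norm_nonneg _)]
    rw [this]
    exact Real.sqrt_le_sqrt h
  obtain ⟨v, σ, hσ, hconv⟩ := hPS u hub2 hgr
  have hGcont : Continuous (gradient Φ) := by
    have : Continuous (fderiv ℝ Φ) := hΦ.continuous_fderiv one_ne_zero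
    exact (InnerProductSpace.toDual ℝ X).symm.continuous.comp this
  -- gradient Φ v = 0
  have hGv : gradient Φ v = 0 := by
    have h1 : Tendsto (fun k => ‖gradient Φ (u (σ k))‖) atTop (nhds ‖gradient Φ v‖) := by
      have := ((hGcont.tendsto v).comp hconv).norm
      exact this
    have h2 : Tendsto (fun k => ‖gradient Φ (u (σ k))‖) atTop (nhds 0) :=
      hgr.comp hσ.tendsto_atTop
    have := tendsto_nhds_unique h1 h2
    simpa [norm_eq_zero] using this
  -- Φ v = c
  have hΦv : Φ v = c := by
    have h1 : Tendsto (fun k => Φ (u (σ k))) atTop (nhds (Φ v)) :=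
      (hΦ.continuous.tendsto v).comp hconv
    have h2 : Tendsto (fun k => Φ (u k)) atTop (nhds c) := by
      rw [tendsto_iff_dist_tendsto_zero]
      refine squeeze_zero (fun k => dist_nonneg) (fun k => ?_) hnt
      rw [Real.dist_eq]
      exact hu1 k
    exact tendsto_nhds_unique h1 (h2.comp hσ.tendsto_atTop)
  exact ⟨hβc, v, hGv, hΦv, hΦv ▸ hβc⟩
end
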